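/- For every p ∈ ℕ₀ and every n ∈ ℕ, one has H_n(−p, 4) = H_n(−p)·H_n(4) − B_p·H_n(3) − (p/2)·B_{p−1}·H_n(2) − (p(p−1)/6)·B_{p−2}·H_n − C^{(p)}_3(n), where the terms (p/2)·B_{p−1} and (p(p−1)/6)·B_{p−2} are understood to be 0 when their Bernoulli index would be negative. -/

import Mathlib

/-- Extended multiple harmonic sum `H_n(k_1,…,k_r) = ∑_{n ≥ n_1 > ⋯ > n_r ≥ 1} 1/(n_1^{k_1} ⋯ n_r^{k_r})`,
with `H_n(∅) = 1`; the exponents may be arbitrary integers.  In particular `Hs n [-(p:ℤ)] = ∑_{m=1}^n m^p`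
and `Hs n [1]` is the `n`-th harmonic number. -/
def Hs : ℕ → List ℤ → ℚ
  | _, [] => 1
  | n, k :: ks => ∑ m ∈ Finset.Icc 1 n, ((m : ℚ) ^ k)⁻¹ * Hs (m - 1) ks

/-- The polynomial `C^{(p)}_{a_2,…,a_r}(x)`, where the list `a = [a_1, a_2, …, a_r]` is the *full*
subscript list including the leading `a_1 = 0` (so `Cpoly p [0]` is `C^{(p)}`, `Cpoly p [0,0]`
is `C^{(p)}_0`, `Cpoly p [0,1,2]` is `C^{(p)}_{1,2}`, …):
`C^{(p)}_{a_2,…,a_r}(x) = ∑_{j_1,…,j_r ≥ 0, j_1+⋯+j_r ≤ p-a_r}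
  (∏_{i=1}^r binom(p+1-a_i-j_1-⋯-j_{i-1}, j_i) B_{j_i} / (p+1-a_i-j_1-⋯-j_{i-1}))
    x^{p+1-a_r-j_1-⋯-j_r}`,
the zero polynomial if `p < a_r`, with `B_j = bernoulli' j`. -/
noncomputable def Cpoly (p : ℕ) (a : List ℕ) : Polynomial ℚ :=
  ∑ j ∈ Fintype.piFinset (fun _ : Fin a.length => Finset.range (p + 1)),
    if (∑ i, j i) + a.getLastD 0 ≤ p then
      Polynomial.C (∏ i : Fin a.length,
        ((p + 1 - a.get i - ∑ i' ∈ Finset.Iio i, j i').choose (j i) : ℚ) * bernoulli' (j i) /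
          ((p + 1 - a.get i - ∑ i' ∈ Finset.Iio i, j i' : ℕ) : ℚ)) *
        Polynomial.X ^ (p + 1 - a.getLastD 0 - ∑ i, j i)
    else 0

open Finset

/-- Faulhaber's theorem in `bernoulli'` form, over `Icc 1 n`. -/
lemma faul (q n : ℕ) : ∑ m ∈ Finset.Icc 1 n, (m:ℚ)^q
    = ∑ i ∈ range (q+1), bernoulli' i * (q+1).choose i * (n:ℚ)^(q+1-i)/(q+1) := by
  rw [← Finset.Ico_add_one_right_eq_Icc]
  exact sum_Ico_pow n q

lemma faul_diff (q n : ℕ) :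
    ∑ i ∈ range (q+1), bernoulli' i * (q+1).choose i * ((n:ℚ)+1)^(q+1-i)/(q+1)
      - ∑ i ∈ range (q+1), bernoulli' i * (q+1).choose i * (n:ℚ)^(q+1-i)/(q+1)
    = ((n:ℚ)+1)^q := by
  have h1 := faul q (n+1)
  have h0 := faul q n
  push_cast at h1
  rw [← h1, ← h0, Finset.sum_Icc_succ_top (by omega)]
  push_cast
  ring

lemma sum_piFinset_two {M : Type*} [AddCommMonoid M] (s : Finset ℕ) (f : (Fin 2 → ℕ) → M) :
    ∑ j ∈ Fintype.piFinset (fun _ : Fin 2 => s), f j = ∑ a ∈ s, ∑ b ∈ s, f ![a, b] := by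
  rw [← Finset.sum_product']
  refine Finset.sum_nbij' (fun j => (j 0, j 1)) (fun x => ![x.1, x.2]) ?_ ?_ ?_ ?_ ?_
  · intro j hj
    simp only [Fintype.mem_piFinset] at hj
    simp [Finset.mem_product, hj 0, hj 1]
  · intro x hx
    simp only [Finset.mem_product] at hx
    simp [Fintype.mem_piFinset, Fin.forall_fin_two, hx.1, hx.2]
  · intro j _
    funext i
    fin_cases i <;> simp
  · intro x _; simp
  · intro j _
    congr 1
    funext i
    fin_cases i <;> simp

lemma Cpoly_eval (p : ℕ) (x : ℚ) :
    (Cpoly p [0, 3]).eval x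
      = ∑ a ∈ range (p+1), ∑ b ∈ range (p+1),
          if a + b + 3 ≤ p then
            (((p+1).choose a : ℚ) * bernoulli' a / (p+1)) *
              (((p+1-3-a).choose b : ℚ) * bernoulli' b / ((p+1-3-a : ℕ) : ℚ)) *
              x ^ (p+1-3-a-b)
          else 0 := by
  rw [Cpoly]
  erw [sum_piFinset_two]
  simp only [List.length_cons, List.length_nil, Nat.reduceAdd]
  rw [Polynomial.eval_finset_sum]
  refine Finset.sum_congr rfl fun a _ => ?_
  rw [Polynomial.eval_finset_sum]
  refine Finset.sum_congr rfl fun b _ => ?_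
  have h2 : (∑ i : Fin 2, ![a,b] i) = a + b := by simp [Fin.sum_univ_two]
  have hL : ([0,3] : List ℕ).getLastD 0 = 3 := rfl
  rw [h2, hL]
  by_cases h : a + b + 3 ≤ p
  · rw [if_pos h, if_pos h]
    rw [Polynomial.eval_mul, Polynomial.eval_C, Polynomial.eval_pow, Polynomial.eval_X]
    rw [Fin.prod_univ_two]
    have hI0 : Finset.Iio (0 : Fin 2) = ∅ := rfl
    have hI1 : Finset.Iio (1 : Fin 2) = {0} := rfl
    rw [hI0, hI1]
    simp only [Finset.sum_empty, Finset.sum_singleton]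
    norm_num
    left
    congr 1
    omega
  · rw [if_neg h, if_neg h, Polynomial.eval_zero]

lemma Cpoly_diff (p n : ℕ) :
    (Cpoly p [0,3]).eval ((n:ℚ)+1) - (Cpoly p [0,3]).eval (n:ℚ)
      = ∑ a ∈ range (p+1), if a + 3 ≤ p then
          ((p+1).choose a : ℚ) * bernoulli' a / (p+1) * ((n:ℚ)+1) ^ (p-3-a)
        else 0 := by
  rw [Cpoly_eval, Cpoly_eval, ← Finset.sum_sub_distrib]
  refine Finset.sum_congr rfl fun a ha => ?_
  rw [← Finset.sum_sub_distrib]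
  by_cases h : a + 3 ≤ p
  · rw [if_pos h]
    have hq1 : p + 1 - 3 - a = (p - 3 - a) + 1 := by omega
    set q := p - 3 - a with hqdef
    rw [← Finset.sum_subset (Finset.range_subset_range.2 (show q+1 ≤ p+1 by omega))
      (fun b _ hb => by
        rw [if_neg (by simp at hb; omega), if_neg (by simp at hb; omega), sub_self])]
    calc ∑ b ∈ range (q+1),
          ((if a + b + 3 ≤ p then
            (((p+1).choose a : ℚ) * bernoulli' a / (p+1)) *
              (((p+1-3-a).choose b : ℚ) * bernoulli' b / ((p+1-3-a : ℕ) : ℚ)) *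
              ((n:ℚ)+1) ^ (p+1-3-a-b)
          else 0)
          - (if a + b + 3 ≤ p then
            (((p+1).choose a : ℚ) * bernoulli' a / (p+1)) *
              (((p+1-3-a).choose b : ℚ) * bernoulli' b / ((p+1-3-a : ℕ) : ℚ)) *
              (n:ℚ) ^ (p+1-3-a-b)
          else 0))
        = ((p+1).choose a : ℚ) * bernoulli' a / (p+1) *
            ∑ b ∈ range (q+1),
              (bernoulli' b * ((q+1).choose b) * ((n:ℚ)+1)^(q+1-b)/(q+1)
                - bernoulli' b * ((q+1).choose b) * (n:ℚ)^(q+1-b)/(q+1)) := by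
          rw [Finset.mul_sum]
          refine Finset.sum_congr rfl fun b hb => ?_
          simp only [Finset.mem_range] at hb
          rw [if_pos (by omega), if_pos (by omega), hq1]
          push_cast
          ring
      _ = ((p+1).choose a : ℚ) * bernoulli' a / (p+1) * ((n:ℚ)+1) ^ q := by
          rw [Finset.sum_sub_distrib, faul_diff q n]
  · rw [if_neg h]
    refine Finset.sum_eq_zero fun b _ => ?_
    rw [if_neg (by omega), if_neg (by omega), sub_self]

lemma tailB (p : ℕ) (N : ℚ) :
    (∑ a ∈ range (p+1), if a + 3 ≤ p then 0
        else ((p+1).choose a : ℚ) * bernoulli' a / (p+1) * N^(p+1-a))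
    = bernoulli' p * N + (p:ℚ)/2 * bernoulli' (p-1) * N^2
        + (p:ℚ)*((p:ℚ)-1)/6 * bernoulli' (p-2) * N^3 := by
  match p with
  | 0 => norm_num [Finset.sum_range_succ]
  | 1 => norm_num [Finset.sum_range_succ, bernoulli'_one]; ring
  | 2 =>
      norm_num [Finset.sum_range_succ, bernoulli'_one, bernoulli'_two]
      ring
  | (q+3) =>
      rw [Finset.sum_range_succ, Finset.sum_range_succ, Finset.sum_range_succ]
      rw [Finset.sum_eq_zero (fun a ha => by
        rw [if_pos (by simp at ha; omega)]), zero_add]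
      rw [if_neg (by omega), if_neg (by omega), if_neg (by omega)]
      have c1 : ((q+3+1).choose (q+3) : ℚ) = (q:ℚ)+4 := by
        rw [Nat.choose_succ_self_right]; push_cast; ring
      have e2 : ((q+4).choose (q+2)) * 2 = (q+4)*(q+3) := by
        rw [show q+2 = (q+4)-2 by omega, Nat.choose_symm (by omega)]
        have h := Nat.add_one_mul_choose_eq (q+3) 1
        simp only [Nat.succ_eq_add_one, Nat.choose_one_right,
          show q+3+1 = q+4 from rfl, show (1:ℕ)+1 = 2 from rfl] at h
        omega
      have e3 : ((q+4).choose (q+1)) * 6 = (q+4)*(q+3)*(q+2) := by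
        rw [show q+1 = (q+4)-3 by omega, Nat.choose_symm (by omega)]
        have h1 := Nat.add_one_mul_choose_eq (q+3) 2
        have h2 := Nat.add_one_mul_choose_eq (q+2) 1
        simp only [Nat.succ_eq_add_one, Nat.choose_one_right,
          show q+3+1 = q+4 from rfl, show q+2+1 = q+3 from rfl,
          show (1:ℕ)+1 = 2 from rfl, show (2:ℕ)+1 = 3 from rfl] at h1 h2
        calc (q+4).choose 3 * 6 = ((q+4).choose 3 * 3) * 2 := by ring
          _ = ((q+4) * (q+3).choose 2) * 2 := by rw [← h1]
          _ = (q+4) * ((q+3).choose 2 * 2) := by ring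
          _ = (q+4) * ((q+3)*(q+2)) := by rw [h2]
          _ = (q+4)*(q+3)*(q+2) := by ring
      have cQ2 : ((q+3+1).choose (q+3-1) : ℚ) = ((q:ℚ)+4)*((q:ℚ)+3)/2 := by
        rw [eq_div_iff (by norm_num)]
        exact_mod_cast e2
      have cQ3 : ((q+3+1).choose (q+3-2) : ℚ) = ((q:ℚ)+4)*((q:ℚ)+3)*((q:ℚ)+2)/6 := by
        rw [eq_div_iff (by norm_num)]
        exact_mod_cast e3
      rw [show q+3+1-(q+3) = 1 by omega, show q+3+1-(q+2) = 2 by omega,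
        show q+3+1-(q+1) = 3 by omega]
      rw [show q+2 = q+3-1 by omega, show q+1 = q+3-2 by omega]
      rw [c1, cQ2, cQ3]
      have h4 : ((q:ℚ)+3+1) ≠ 0 := by positivity
      push_cast
      field_simp
      ring

lemma key (p n : ℕ) :
    ∑ m ∈ Finset.Icc 1 (n+1), (m:ℚ)^p
      = bernoulli' p * ((n:ℚ)+1) + (p:ℚ)/2 * bernoulli' (p-1) * ((n:ℚ)+1)^2
        + (p:ℚ)*((p:ℚ)-1)/6 * bernoulli' (p-2) * ((n:ℚ)+1)^3
        + ((n:ℚ)+1)^4 * ((Cpoly p [0,3]).eval ((n:ℚ)+1) - (Cpoly p [0,3]).eval (n:ℚ)) := by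
  have h1 := faul p (n+1)
  push_cast at h1
  rw [h1, Cpoly_diff, Finset.mul_sum, ← tailB p ((n:ℚ)+1), ← Finset.sum_add_distrib]
  refine Finset.sum_congr rfl fun a ha => ?_
  simp only [Finset.mem_range] at ha
  by_cases h : a + 3 ≤ p
  · rw [if_pos h, if_pos h, show p+1-a = 4 + (p-3-a) by omega, pow_add]
    ring
  · rw [if_neg h, if_neg h]
    ring

lemma Hs_succ (n : ℕ) (k : ℤ) (ks : List ℤ) :
    Hs (n+1) (k :: ks) = Hs n (k :: ks) + (((n+1 : ℕ) : ℚ) ^ k)⁻¹ * Hs n ks := by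
  show (∑ m ∈ Finset.Icc 1 (n+1), ((m:ℚ)^k)⁻¹ * Hs (m-1) ks) = _
  rw [Finset.sum_Icc_succ_top (by omega)]
  rfl

lemma HsP (p n : ℕ) : Hs n [-(p:ℤ)] = ∑ m ∈ Finset.Icc 1 n, (m:ℚ)^p := by
  show (∑ m ∈ Finset.Icc 1 n, ((m:ℚ)^(-(p:ℤ)))⁻¹ * Hs (m-1) []) = _
  refine Finset.sum_congr rfl fun m _ => ?_
  rw [show Hs (m-1) [] = 1 from rfl, mul_one, zpow_neg, inv_inv, zpow_natCast]

lemma algebra_step (T0 B0 B1 B2 c1 c2 S H4 H3 H2 H1 T eN en x : ℚ)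
    (hx : x ≠ 0)
    (K : S + T = B0 * x + c1 * B1 * x^2 + c2 * B2 * x^3 + x^4 * (eN - en))
    (ih : T0 = S * H4 - B0 * H3 - c1 * B1 * H2 - c2 * B2 * H1 - en) :
    T0 + T * H4
      = (S + T) * (H4 + (x^4)⁻¹) - B0 * (H3 + (x^3)⁻¹)
        - c1 * B1 * (H2 + (x^2)⁻¹) - c2 * B2 * (H1 + x⁻¹) - eN := by
  rw [ih]
  have h4 : x^4 ≠ 0 := pow_ne_zero _ hx
  field_simp
  linear_combination (-1 : ℚ) * K

/-- `H_n(−p,4) = H_n(−p)·H_n(4) − B_p·H_n(3) − (p/2)·B_{p−1}·H_n(2)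
− (p(p−1)/6)·B_{p−2}·H_n − C^{(p)}_3(n)`;
the factors `(p/2)·B_{p−1}` and `(p(p−1)/6)·B_{p−2}` are `0` whenever the Bernoulli index would
be negative, because of the factors `p` resp. `p(p−1)`. -/
theorem stmt_13 (p : ℕ) (n : ℕ) (hn : 0 < n) :
    Hs n [-(p : ℤ), 4] =
      Hs n [-(p : ℤ)] * Hs n [4] - bernoulli' p * Hs n [3]
        - (p : ℚ) / 2 * bernoulli' (p - 1) * Hs n [2]
        - (p : ℚ) * ((p : ℚ) - 1) / 6 * bernoulli' (p - 2) * Hs n [1]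
        - (Cpoly p [0, 3]).eval (n : ℚ) := by
  clear hn
  induction n with
  | zero =>
      have h0 : ∀ (k : ℤ) (ks : List ℤ), Hs 0 (k::ks) = 0 := fun k ks => by
        show (∑ m ∈ Finset.Icc 1 (0:ℕ), ((m:ℚ)^k)⁻¹ * Hs (m-1) ks) = 0
        simp
      rw [h0, h0, h0, h0, h0, h0]
      have hz : (Cpoly p [0,3]).eval ((0:ℕ):ℚ) = 0 := by
        rw [Cpoly_eval]
        refine Finset.sum_eq_zero fun a _ => Finset.sum_eq_zero fun b _ => ?_
        by_cases h : a + b + 3 ≤ p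
        · rw [if_pos h, Nat.cast_zero, zero_pow (by omega), mul_zero]
        · rw [if_neg h]
      rw [hz]
      ring
  | succ n ih =>
      have hN : ((n:ℚ)+1) ≠ 0 := by positivity
      have hcast : ((n+1 : ℕ) : ℚ) = (n:ℚ)+1 := by push_cast; ring
      have ep : ((((n+1:ℕ)) : ℚ) ^ (-(p:ℤ)))⁻¹ = ((n:ℚ)+1)^p := by
        rw [hcast, zpow_neg, inv_inv, zpow_natCast]
      have e4 : ((((n+1:ℕ)) : ℚ) ^ (4:ℤ))⁻¹ = (((n:ℚ)+1)^4)⁻¹ := by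
        rw [hcast, show (4:ℤ) = ((4:ℕ):ℤ) from rfl, zpow_natCast]
      have e3 : ((((n+1:ℕ)) : ℚ) ^ (3:ℤ))⁻¹ = (((n:ℚ)+1)^3)⁻¹ := by
        rw [hcast, show (3:ℤ) = ((3:ℕ):ℤ) from rfl, zpow_natCast]
      have e2 : ((((n+1:ℕ)) : ℚ) ^ (2:ℤ))⁻¹ = (((n:ℚ)+1)^2)⁻¹ := by
        rw [hcast, show (2:ℤ) = ((2:ℕ):ℤ) from rfl, zpow_natCast]
      have e1 : ((((n+1:ℕ)) : ℚ) ^ (1:ℤ))⁻¹ = ((n:ℚ)+1)⁻¹ := by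
        rw [hcast, zpow_one]
      have K := key p n
      have hsum : Hs n [-(p:ℤ)] + ((n:ℚ)+1)^p = ∑ m ∈ Finset.Icc 1 (n+1), (m:ℚ)^p := by
        rw [Finset.sum_Icc_succ_top (show 1 ≤ n+1 by omega), HsP p n, hcast]
      rw [← hsum] at K
      rw [Hs_succ n (-(p:ℤ)) [4], Hs_succ n (-(p:ℤ)) [], Hs_succ n 4 [],
        Hs_succ n 3 [], Hs_succ n 2 [], Hs_succ n 1 []]
      simp only [show Hs n ([] : List ℤ) = 1 from rfl, mul_one]
      rw [ep, e4, e3, e2, e1, hcast]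
      exact algebra_step _ _ _ _ _ _ _ _ _ _ _ _ _ _ _ hN K ih
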